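/- Let L be the model of the free graded Lie algebra on two generators a, b of odd degree described in the context, and let S be any subset of L^{(2)}, the part of L of word length 2 in b. Then the intersection of the Lie ideal I(S) of L generated by S with the span of the words of b-length 2 equals the ℚ-span of the elements ad(a)^l(z) for z ∈ S and l ≥ 0; that is, I(S) ∩ span_ℚ{words w with ℓ_b(w) = 2} = span_ℚ{ad(a)^l(z) : z ∈ S, l ≥ 0}. -/

import Mathlib

/-!
Common setup: the free graded Lie algebra on two odd-degree generators `a`, `b`,
modelled inside its universal enveloping algebra `A := FreeAlgebra ℚ (Fin 2)`.
-/

noncomputable section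

namespace Omnibus

/-- The free associative unital `ℚ`-algebra on two generators. -/
abbrev A : Type := FreeAlgebra ℚ (Fin 2)

/-- The first generator, of odd degree. -/
def a : A := FreeAlgebra.ι ℚ 0

/-- The second generator, of odd degree. -/
def b : A := FreeAlgebra.ι ℚ 1

/-- The word (noncommutative monomial) in the letters `a`, `b` associated to a
list of letters. -/
def word (w : List (Fin 2)) : A := (w.map (FreeAlgebra.ι ℚ)).prod

/-- The `ℚ`-basis of `A` given by the words in `a`, `b`. -/
def basisWords : Module.Basis (FreeMonoid (Fin 2)) ℚ A := FreeAlgebra.basisFreeMonoid ℚ (Fin 2)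

/-- The `ℚ`-linear projection of `A` onto the span of the words of odd length,
sending every word of even length to `0`. -/
def pr : A →ₗ[ℚ] A :=
  basisWords.constr ℚ fun w =>
    if Odd (FreeMonoid.toList w).length then word (FreeMonoid.toList w) else 0

/-- The bracket `⁅x,y⁆ = x*y − y*x + 2·(π y)·(π x)`; on elements homogeneous for the
parity grading by word length this is the super-commutator for both generators odd. -/
def br (x y : A) : A := x * y - y * x + 2 * pr y * pr x

/-- A `ℚ`-subspace of `A` closed under the bracket. -/
def IsBracketClosed (S : Submodule ℚ A) : Prop := ∀ x ∈ S, ∀ y ∈ S, br x y ∈ S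

/-- `L`: the smallest `ℚ`-subspace of `A` containing `a`, `b` and closed under the
bracket; a model of the free graded Lie algebra on two odd-degree generators. -/
def L : Submodule ℚ A := sInf {S : Submodule ℚ A | a ∈ S ∧ b ∈ S ∧ IsBracketClosed S}

/-- The span of the set of words `w` satisfying a property `P`. -/
def wordsSpan (P : List (Fin 2) → Prop) : Submodule ℚ A :=
  Submodule.span ℚ (word '' {w | P w})

/-- `L^{(k)}`: the part of `L` of word length `k` in `b`. -/
def Lk (k : ℕ) : Submodule ℚ A := L ⊓ wordsSpan fun w => w.count 1 = k

/-- `L^{(k,n)}`: the part of `L` of word length `k` in `b` and total word length `n`. -/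
def Lkn (k n : ℕ) : Submodule ℚ A :=
  L ⊓ wordsSpan fun w => w.count 1 = k ∧ w.length = n

/-- The `j`-fold iterated adjoint map `ad(x)^j(y)`. -/
def adIter (x : A) (j : ℕ) (y : A) : A := (br x)^[j] y

end Omnibus

namespace Omnibus

/-- A Lie ideal of `L`: a subspace `I ⊆ L` with `⁅z,u⁆ ∈ I` for all `z ∈ L`, `u ∈ I`. -/
def IsLieIdeal (I : Submodule ℚ A) : Prop := I ≤ L ∧ ∀ z ∈ L, ∀ u ∈ I, br z u ∈ I

/-- `I(S)`: the smallest Lie ideal of `L` containing the subset `S`. -/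
def lieIdeal (S : Set A) : Submodule ℚ A := sInf {I : Submodule ℚ A | S ⊆ ↑I ∧ IsLieIdeal I}

end Omnibus
/-!
For `⊇`: `ad(a)` preserves `I(S)` and the `b`-length. For `⊆`, let `J` be the span of the
`ad(a)^l z` and `W` the span of the words with at least three `b`'s. Then `L ∩ (J + W)` is a Lie
ideal containing `S`, and its part of `b`-length `2` is `J`. The ideal property comes from two
facts: modulo words containing `b`, every element of `L` lies in `span {a, a²}`, and
`ad(a²) = ad(a)²` because `a` is odd. Hence `⁅L, J⁆ ⊆ J + W`.
-/

namespace Omnibus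

open Submodule

section Words

theorem word_append (w v : List (Fin 2)) : word (w ++ v) = word w * word v := by
  simp [word]

theorem basisWords_apply (m : FreeMonoid (Fin 2)) :
    basisWords m = word (FreeMonoid.toList m) := by
  change (FreeAlgebra.equivMonoidAlgebraFreeMonoid (R := ℚ)).symm (MonoidAlgebra.single m 1) = _
  simp [FreeAlgebra.equivMonoidAlgebraFreeMonoid, word, FreeMonoid.lift_apply]

theorem wordsSpan_eq_span_basisWords (P : List (Fin 2) → Prop) :
    wordsSpan P = span ℚ (basisWords '' {m | P (FreeMonoid.toList m)}) := by
  refine congrArg (span ℚ) (Set.ext fun x => ⟨?_, ?_⟩)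
  · rintro ⟨w, hw, rfl⟩
    exact ⟨FreeMonoid.ofList w, hw, by rw [basisWords_apply, FreeMonoid.toList_ofList]⟩
  · rintro ⟨m, hm, rfl⟩
    exact ⟨FreeMonoid.toList m, hm, (basisWords_apply m).symm⟩

theorem mem_wordsSpan_iff {P : List (Fin 2) → Prop} {x : A} :
    x ∈ wordsSpan P ↔ ∀ m ∈ (basisWords.repr x).support, P (FreeMonoid.toList m) := by
  rw [wordsSpan_eq_span_basisWords, Module.Basis.mem_span_image]
  rfl

theorem disjoint_wordsSpan {P Q : List (Fin 2) → Prop} (h : ∀ w, P w → ¬ Q w) :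
    Disjoint (wordsSpan P) (wordsSpan Q) := by
  refine disjoint_def.2 fun x hP hQ => basisWords.repr.injective ?_
  ext m
  by_contra hm
  rw [mem_wordsSpan_iff] at hP hQ
  have hm : m ∈ (basisWords.repr x).support := by simpa using hm
  exact h _ (hP m hm) (hQ m hm)

theorem wordsSpan_true : wordsSpan (fun _ => True) = ⊤ := by
  rw [wordsSpan_eq_span_basisWords, Set.ofPred_true, Set.image_univ, Module.Basis.span_eq]

theorem word_mem_wordsSpan {P : List (Fin 2) → Prop} {w : List (Fin 2)} (h : P w) :
    word w ∈ wordsSpan P :=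
  subset_span ⟨w, h, rfl⟩

theorem mul_mem_wordsSpan {P Q R : List (Fin 2) → Prop} {x y : A}
    (hx : x ∈ wordsSpan P) (hy : y ∈ wordsSpan Q)
    (h : ∀ w v, P w → Q v → R (w ++ v)) : x * y ∈ wordsSpan R := by
  induction hx using span_induction with
  | mem x hx =>
    obtain ⟨w, hw, rfl⟩ := hx
    induction hy using span_induction with
    | mem y hy =>
      obtain ⟨v, hv, rfl⟩ := hy
      rw [← word_append]
      exact word_mem_wordsSpan (h w v hw hv)
    | zero => simp
    | add y z _ _ hy hz => rw [mul_add]; exact add_mem hy hz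
    | smul c y _ hy => rw [mul_smul_comm]; exact smul_mem _ _ hy
  | zero => simp
  | add x z _ _ hx hz => rw [add_mul]; exact add_mem hx hz
  | smul c x _ hx => rw [smul_mul_assoc]; exact smul_mem _ _ hx

theorem a_eq_word : a = word [0] := by simp [a, word]

theorem b_eq_word : b = word [1] := by simp [b, word]

end Words

section Parity

theorem pr_word (w : List (Fin 2)) : pr (word w) = if Odd w.length then word w else 0 := by
  have h := Module.Basis.constr_basis basisWords ℚ
    (fun m => if Odd (FreeMonoid.toList m).length then word (FreeMonoid.toList m) else 0)
    (FreeMonoid.ofList w)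
  rwa [basisWords_apply, FreeMonoid.toList_ofList] at h

theorem pr_mem_wordsSpan {P : List (Fin 2) → Prop} {x : A} (hx : x ∈ wordsSpan P) :
    pr x ∈ wordsSpan P := by
  refine (span_le (p := (wordsSpan P).comap pr)).2 ?_ hx
  rintro _ ⟨w, hw, rfl⟩
  rw [SetLike.mem_coe, mem_comap, pr_word]
  split_ifs
  exacts [word_mem_wordsSpan hw, zero_mem _]

theorem pr_pr (x : A) : pr (pr x) = pr x := by
  refine LinearMap.congr_fun (f := pr ∘ₗ pr) (g := pr) (basisWords.ext fun m => ?_) x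
  rw [LinearMap.comp_apply, basisWords_apply, pr_word]
  split_ifs with h
  · rw [pr_word, if_pos h]
  · rw [map_zero]

theorem pr_word_mul_word (w v : List (Fin 2)) :
    pr (word w * word v) =
      pr (word w) * (word v - pr (word v)) + (word w - pr (word w)) * pr (word v) := by
  rw [← word_append, pr_word, pr_word, pr_word, List.length_append]
  by_cases hw : Even w.length <;> by_cases hv : Even v.length <;>
    simp [hw, hv, ← Nat.not_even_iff_odd, Nat.even_add, word_append]

theorem pr_mul (x y : A) : pr (x * y) = pr x * (y - pr y) + (x - pr x) * pr y := by
  have h : (LinearMap.mul ℚ A).compr₂ pr =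
      (LinearMap.mul ℚ A).compl₁₂ pr (LinearMap.id - pr) +
        (LinearMap.mul ℚ A).compl₁₂ (LinearMap.id - pr) pr :=
    basisWords.ext fun m => basisWords.ext fun n => by
      simpa [basisWords_apply, sub_mul] using pr_word_mul_word m.toList n.toList
  simpa [sub_mul] using LinearMap.congr_fun₂ h x y

theorem pr_a : pr a = a := by
  rw [a_eq_word, pr_word]; simp

theorem pr_a_mul_a : pr (a * a) = 0 := by
  simp [pr_mul, pr_a]

end Parity

section Bracket

theorem br_add_left (x y z : A) : br (x + y) z = br x z + br y z := by
  simp only [br, map_add]; noncomm_ring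

theorem br_add_right (x y z : A) : br x (y + z) = br x y + br x z := by
  simp only [br, map_add]; noncomm_ring

theorem br_smul_left (c : ℚ) (x y : A) : br (c • x) y = c • br x y := by
  simp only [br, map_smul, smul_sub, smul_add, mul_smul_comm, smul_mul_assoc]

theorem br_smul_right (c : ℚ) (x y : A) : br x (c • y) = c • br x y := by
  simp only [br, map_smul, smul_sub, smul_add, mul_smul_comm, smul_mul_assoc]

def brBilin : A →ₗ[ℚ] A →ₗ[ℚ] A :=
  LinearMap.mk₂ ℚ br br_add_left br_smul_left br_add_right br_smul_right

theorem br_mem_wordsSpan {P Q R : List (Fin 2) → Prop} {x y : A}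
    (hx : x ∈ wordsSpan P) (hy : y ∈ wordsSpan Q)
    (hPQ : ∀ w v, P w → Q v → R (w ++ v)) (hQP : ∀ w v, Q w → P v → R (w ++ v)) :
    br x y ∈ wordsSpan R := by
  have hpr : pr y * pr x ∈ wordsSpan R :=
    mul_mem_wordsSpan (pr_mem_wordsSpan hy) (pr_mem_wordsSpan hx) hQP
  rw [br, two_mul, add_mul]
  exact add_mem (sub_mem (mul_mem_wordsSpan hx hy hPQ) (mul_mem_wordsSpan hy hx hQP))
    (add_mem hpr hpr)

theorem br_mem_wordsSpan_count_add {x y : A} {m n : ℕ}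
    (hx : x ∈ wordsSpan fun w => w.count 1 = m) (hy : y ∈ wordsSpan fun w => w.count 1 = n) :
    br x y ∈ wordsSpan fun w => w.count 1 = m + n :=
  br_mem_wordsSpan hx hy (fun w v hw hv => by rw [List.count_append, hw, hv])
    (fun w v hw hv => by rw [List.count_append, hw, hv, add_comm])

theorem br_mem_wordsSpan_count_ge_left {x : A} {n : ℕ}
    (hx : x ∈ wordsSpan fun w => n ≤ w.count 1) (y : A) :
    br x y ∈ wordsSpan fun w => n ≤ w.count 1 :=
  br_mem_wordsSpan hx (wordsSpan_true ▸ mem_top (x := y))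
    (fun w v hw _ => by rw [List.count_append]; omega)
    (fun w v _ hv => by rw [List.count_append]; omega)

theorem br_mem_wordsSpan_count_ge_right (x : A) {y : A} {n : ℕ}
    (hy : y ∈ wordsSpan fun w => n ≤ w.count 1) :
    br x y ∈ wordsSpan fun w => n ≤ w.count 1 :=
  br_mem_wordsSpan (wordsSpan_true ▸ mem_top (x := x)) hy
    (fun w v _ hv => by rw [List.count_append]; omega)
    (fun w v hw _ => by rw [List.count_append]; omega)

theorem br_a_a : br a a = (2 : ℚ) • (a * a) := by
  rw [br, pr_a, two_smul]; noncomm_ring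

theorem br_a_mul_a (u : A) : br (a * a) u = br a (br a u) := by
  have hpr : pr (br a u) = a * (u - pr u) - (u - pr u) * a := by
    rw [br, pr_a, mul_assoc, two_mul]
    simp [pr_mul, pr_a, pr_pr]
  unfold br at hpr ⊢
  rw [hpr, pr_a, pr_a_mul_a]
  noncomm_ring

theorem br_mem_of_mem_span {s t : Set A} {P : Submodule ℚ A}
    (h : ∀ x ∈ s, ∀ y ∈ t, br x y ∈ P) {x y : A}
    (hx : x ∈ span ℚ s) (hy : y ∈ span ℚ t) :
    br x y ∈ P := by
  have hxy := apply_mem_map₂ brBilin hx hy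
  rw [map₂_span_span] at hxy
  exact span_le.2 (by rintro _ ⟨x, hx, y, hy, rfl⟩; exact h x hx y hy) hxy

end Bracket

section FreeLie

theorem a_mem_L : a ∈ L := mem_sInf.2 fun _ hS => hS.1

theorem br_mem_L {x y : A} (hx : x ∈ L) (hy : y ∈ L) : br x y ∈ L :=
  mem_sInf.2 fun T hT => hT.2.2 x (mem_sInf.1 hx T hT) y (mem_sInf.1 hy T hT)

/-- Spanned by `a` and `a² = ½⁅a,a⁆`; it contains the `b`-free part of `L`. -/
def aSpan : Submodule ℚ A := span ℚ {a, a * a}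

theorem br_mem_aSpan {x y : A} (hx : x ∈ aSpan) (hy : y ∈ aSpan) : br x y ∈ aSpan := by
  refine br_mem_of_mem_span ?_ hx hy
  rintro x (rfl | rfl) y (rfl | rfl)
  · rw [br_a_a]; exact smul_mem _ _ (subset_span (by simp))
  all_goals
    convert zero_mem aSpan using 1
    simp [br, pr_a_mul_a, mul_assoc]

theorem L_le_aSpan_sup : L ≤ aSpan ⊔ wordsSpan fun w => 1 ≤ w.count 1 := by
  refine sInf_le ⟨mem_sup_left (subset_span (by simp)),
    mem_sup_right (b_eq_word ▸ word_mem_wordsSpan (by decide)), fun x hx y hy => ?_⟩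
  obtain ⟨x₀, hx₀, x₁, hx₁, rfl⟩ := mem_sup.1 hx
  obtain ⟨y₀, hy₀, y₁, hy₁, rfl⟩ := mem_sup.1 hy
  rw [br_add_left, br_add_right]
  exact add_mem (add_mem (mem_sup_left (br_mem_aSpan hx₀ hy₀))
    (mem_sup_right (br_mem_wordsSpan_count_ge_right _ hy₁)))
    (mem_sup_right (br_mem_wordsSpan_count_ge_left hx₁ _))

theorem subset_lieIdeal (S : Set A) : S ⊆ lieIdeal S :=
  fun _ hz => mem_sInf.2 fun _ hI => hI.1 hz

theorem br_mem_lieIdeal {S : Set A} {z u : A} (hz : z ∈ L) (hu : u ∈ lieIdeal S) :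
    br z u ∈ lieIdeal S :=
  mem_sInf.2 fun I hI => hI.2.2 z hz u (mem_sInf.1 hu I hI)

theorem lieIdeal_le {S : Set A} {I : Submodule ℚ A} (hS : S ⊆ I) (hI : IsLieIdeal I) :
    lieIdeal S ≤ I :=
  sInf_le ⟨hS, hI⟩

end FreeLie

section Orbit

variable {S : Set A}

def adAOrbitSpan (S : Set A) : Submodule ℚ A :=
  span ℚ {x : A | ∃ z ∈ S, ∃ l : ℕ, x = adIter a l z}

theorem adIter_succ (x : A) (l : ℕ) (y : A) : adIter x (l + 1) y = br x (adIter x l y) :=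
  Function.iterate_succ_apply' _ _ _

theorem adAOrbitSpan_le {P : Submodule ℚ A} (hS : S ⊆ P) (hP : ∀ u ∈ P, br a u ∈ P) :
    adAOrbitSpan S ≤ P := by
  refine span_le.2 ?_
  rintro _ ⟨z, hz, l, rfl⟩
  induction l with
  | zero => exact hS hz
  | succ l ih => rw [adIter_succ]; exact hP _ ih

theorem br_a_mem_adAOrbitSpan {u : A} (hu : u ∈ adAOrbitSpan S) : br a u ∈ adAOrbitSpan S := by
  refine br_mem_of_mem_span (s := {a}) ?_ (mem_span_singleton_self a) hu
  rintro _ rfl _ ⟨z, hz, l, rfl⟩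
  rw [← adIter_succ]
  exact subset_span ⟨z, hz, l + 1, rfl⟩

theorem br_mem_adAOrbitSpan_of_mem_aSpan {z u : A} (hz : z ∈ aSpan) (hu : u ∈ adAOrbitSpan S) :
    br z u ∈ adAOrbitSpan S := by
  refine br_mem_of_mem_span ?_ hz ((span_eq (adAOrbitSpan S)).symm ▸ hu)
  rintro _ (rfl | rfl) u hu
  · exact br_a_mem_adAOrbitSpan hu
  · rw [br_a_mul_a]
    exact br_a_mem_adAOrbitSpan (br_a_mem_adAOrbitSpan hu)

theorem adAOrbitSpan_le_wordsSpan (hS : S ⊆ wordsSpan fun w => w.count 1 = 2) :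
    adAOrbitSpan S ≤ wordsSpan fun w => w.count 1 = 2 :=
  adAOrbitSpan_le hS fun _ hu => by
    have ha : a ∈ wordsSpan fun w => w.count 1 = 0 := a_eq_word ▸ word_mem_wordsSpan (by decide)
    simpa using br_mem_wordsSpan_count_add ha hu

theorem br_mem_adAOrbitSpan_sup (hS : S ⊆ wordsSpan fun w => w.count 1 = 2) {z u : A}
    (hz : z ∈ L) (hu : u ∈ adAOrbitSpan S) :
    br z u ∈ adAOrbitSpan S ⊔ wordsSpan fun w => 3 ≤ w.count 1 := by
  obtain ⟨z₀, hz₀, z₁, hz₁, rfl⟩ := mem_sup.1 (L_le_aSpan_sup hz)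
  rw [br_add_left]
  refine add_mem (mem_sup_left (br_mem_adAOrbitSpan_of_mem_aSpan hz₀ hu)) (mem_sup_right ?_)
  exact br_mem_wordsSpan hz₁ (adAOrbitSpan_le_wordsSpan hS hu)
    (fun w v hw hv => by rw [List.count_append]; omega)
    (fun w v hw hv => by rw [List.count_append]; omega)

theorem isLieIdeal_inf_adAOrbitSpan_sup (hS : S ⊆ wordsSpan fun w => w.count 1 = 2) :
    IsLieIdeal (L ⊓ (adAOrbitSpan S ⊔ wordsSpan fun w => 3 ≤ w.count 1)) := by
  refine ⟨inf_le_left, fun z hz u hu => ?_⟩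
  obtain ⟨huL, hu⟩ := mem_inf.1 hu
  obtain ⟨j, hj, w, hw, rfl⟩ := mem_sup.1 hu
  refine mem_inf.2 ⟨br_mem_L hz huL, ?_⟩
  rw [br_add_right]
  exact add_mem (br_mem_adAOrbitSpan_sup hS hz hj)
    (mem_sup_right (br_mem_wordsSpan_count_ge_right z hw))

end Orbit

end Omnibus

open Omnibus in
/-- For any subset `S ⊆ L^{(2)}`, the intersection of the Lie ideal `I(S)` of `L` with the span
of the words of `b`-length `2` is the span of the elements `ad(a)^l(z)`, `z ∈ S`, `l ≥ 0`. -/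
theorem lieIdeal_inter_wordLengthTwoInB (S : Set A) (hS : S ⊆ ↑(Lk 2)) :
    lieIdeal S ⊓ wordsSpan (fun w => w.count 1 = 2) =
      Submodule.span ℚ {x : A | ∃ z ∈ S, ∃ l : ℕ, x = adIter a l z} := by
  change _ = adAOrbitSpan S
  have hS₂ : S ⊆ wordsSpan fun w => w.count 1 = 2 := fun z hz => (Submodule.mem_inf.1 (hS hz)).2
  have hJ₂ := adAOrbitSpan_le_wordsSpan hS₂
  refine le_antisymm ?_
    (le_inf (adAOrbitSpan_le (subset_lieIdeal S) fun _ => br_mem_lieIdeal a_mem_L) hJ₂)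
  have hI : lieIdeal S ≤ L ⊓ (adAOrbitSpan S ⊔ wordsSpan fun w => 3 ≤ w.count 1) :=
    lieIdeal_le
      (fun z hz => ⟨(hS hz).1, Submodule.mem_sup_left (Submodule.subset_span ⟨z, hz, 0, rfl⟩)⟩)
      (isLieIdeal_inf_adAOrbitSpan_sup hS₂)
  calc lieIdeal S ⊓ wordsSpan (fun w => w.count 1 = 2)
      ≤ (adAOrbitSpan S ⊔ wordsSpan fun w => 3 ≤ w.count 1) ⊓
          wordsSpan (fun w => w.count 1 = 2) := inf_le_inf_right _ (hI.trans inf_le_right)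
    _ = adAOrbitSpan S ⊔ (wordsSpan (fun w => 3 ≤ w.count 1) ⊓
          wordsSpan (fun w => w.count 1 = 2)) := sup_inf_assoc_of_le _ hJ₂
    _ = adAOrbitSpan S := by
      rw [(disjoint_wordsSpan fun w h₃ h₂ => by omega).eq_bot, sup_bot_eq]
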